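/- Let M = (m_{jk}) be an n×n complex matrix with operator norm ‖M‖ ≤ 1 and suppose |m_{jk}| ≤ C e^{−μ K(|x_j − y_k|)} for a nonnegative function K, constants C, μ > 0, and distinct point configurations X = {x_j}, Y = {y_k} ⊂ Z^d. Then |det M| ≤ C · (sum over pairs (x,y) ∈ X×Y with |x−y| ≥ D_m(X,Y) of e^{−2μ K(|x−y|)})^{1/2}. -/

import Mathlib

open Finset Matrix
open scoped Classical ComplexOrder

noncomputable def ed {d : ℕ} (x y : Fin d → ℤ) : ℝ :=
  Real.sqrt (∑ i, ((x i : ℝ) - (y i : ℝ)) ^ 2)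

noncomputable def Dm {d n : ℕ} [NeZero n] (x y : Fin n → Fin d → ℤ) : ℝ :=
  Finset.univ.inf' Finset.univ_nonempty fun π : Equiv.Perm (Fin n) =>
    Finset.univ.sup' Finset.univ_nonempty fun j => ed (x j) (y (π j))

noncomputable def opNorm {a b : ℕ} (M : Matrix (Fin a) (Fin b) ℂ) : ℝ :=
  ‖LinearMap.toContinuousLinearMap (Matrix.toEuclideanLin M)‖

lemma norm_apply_le {a b : ℕ} (M : Matrix (Fin a) (Fin b) ℂ) (w : EuclideanSpace ℂ (Fin b)) :
    ‖Matrix.toEuclideanLin M w‖ ≤ opNorm M * ‖w‖ := by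
  have := (LinearMap.toContinuousLinearMap (Matrix.toEuclideanLin M)).le_opNorm w
  simpa [opNorm] using this

lemma det_le_norm_apply {n : ℕ} (M : Matrix (Fin n) (Fin n) ℂ) (hM : opNorm M ≤ 1)
    (v : EuclideanSpace ℂ (Fin n)) (hv : ‖v‖ = 1) :
    ‖M.det‖ ≤ ‖Matrix.toEuclideanLin M v‖ := by
  classical
  set A := Mᴴ * M with hAdef
  have hA : A.IsHermitian := Matrix.isHermitian_conjTranspose_mul_self M
  have hPSD : A.PosSemidef := Matrix.posSemidef_conjTranspose_mul_self M
  set f := Matrix.toEuclideanLin M with hf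
  set T := Matrix.toEuclideanLin A with hT
  -- quadratic form identity
  have hq : ∀ w : EuclideanSpace ℂ (Fin n), inner ℂ w (T w) = ((‖f w‖ : ℂ))^2 := by
    intro w
    have hTw : T w = LinearMap.adjoint f (f w) := by
      rw [hT, hAdef, show Matrix.toEuclideanLin (Mᴴ * M) =
        (Matrix.toEuclideanLin Mᴴ).comp (Matrix.toEuclideanLin M) from ?_ ]
      · rw [Matrix.toEuclideanLin_conjTranspose_eq_adjoint]; rfl
      · rw [Matrix.toEuclideanLin_eq_toLin, Matrix.toLin_mul _ (PiLp.basisFun 2 ℂ (Fin n)) _]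
    rw [hTw, LinearMap.adjoint_inner_right, inner_self_eq_norm_sq_to_K]; norm_cast
  set B := hA.eigenvectorBasis with hB
  set lam := hA.eigenvalues with hlam
  have hTB : ∀ i, T (B i) = (lam i : ℂ) • B i := by
    intro i
    have h1 := hA.mulVec_eigenvectorBasis i
    have h2 : T (B i) = (WithLp.equiv 2 (Fin n → ℂ)).symm (lam i • ⇑(B i)) := by
      rw [hT, Matrix.toEuclideanLin_apply]; exact congrArg (WithLp.toLp 2) h1
    rw [h2]
    ext j
    simp [Complex.real_smul]
  set c : Fin n → ℂ := fun i => inner ℂ (B i) v with hc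
  have hcv : ∑ i, Complex.normSq (c i) = 1 := by
    have h1 : ‖B.repr v‖ = 1 := by rw [B.repr.norm_map v, hv]
    have h2 := EuclideanSpace.norm_eq (B.repr v)
    rw [h1] at h2
    have h3 : ∑ i, ‖B.repr v i‖ ^ 2 = 1 := Real.sqrt_eq_one.mp h2.symm
    rw [← h3]
    refine Finset.sum_congr rfl fun i _ => ?_
    simp only [Complex.normSq_eq_norm_sq]
    rw [hc, B.repr_apply_apply]
  have hqv : (‖f v‖ : ℝ) ^ 2 = ∑ i, lam i * Complex.normSq (c i) := by
    have hTv : T v = ∑ i, (c i * (lam i : ℂ)) • B i := by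
      conv_lhs => rw [← B.sum_repr' v]
      rw [map_sum]
      refine Finset.sum_congr rfl fun i _ => ?_
      rw [_root_.map_smul, hTB i, smul_smul]
    have h1 : (inner ℂ v (T v) : ℂ) = ∑ i, (lam i : ℂ) * Complex.normSq (c i) := by
      rw [hTv, inner_sum]
      refine Finset.sum_congr rfl fun i _ => ?_
      rw [inner_smul_right]
      have hconj : (inner ℂ v (B i) : ℂ) = (starRingEnd ℂ) (c i) := (inner_conj_symm v (B i)).symm
      rw [hconj, show c i * (lam i:ℂ) * (starRingEnd ℂ) (c i) = (lam i:ℂ) * (c i * (starRingEnd ℂ) (c i)) by ring,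
        Complex.mul_conj]
    have h2 := (hq v).symm.trans h1
    have h3 : ((‖f v‖ ^ 2 : ℝ) : ℂ) = ((∑ i, lam i * Complex.normSq (c i) : ℝ) : ℂ) := by
      push_cast
      exact h2
    exact_mod_cast h3
  have hlam0 : ∀ i, 0 ≤ lam i := hPSD.eigenvalues_nonneg
  have hlamval : ∀ i, lam i = ‖f (B i)‖ ^ 2 := by
    intro i
    have hBi : ‖B i‖ = 1 := B.orthonormal.1 i
    have h1 : (inner ℂ (B i) (T (B i)) : ℂ) = (lam i : ℂ) := by
      rw [hTB i, inner_smul_right, inner_self_eq_norm_sq_to_K, hBi]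
      norm_num
    have h2 := (h1.symm.trans (hq (B i)))
    exact_mod_cast h2
  have hlam1 : ∀ i, lam i ≤ 1 := by
    intro i
    have hBi : ‖B i‖ = 1 := B.orthonormal.1 i
    have h1 : ‖f (B i)‖ ≤ 1 := by
      have := norm_apply_le M (B i)
      rw [hBi, mul_one] at this
      exact this.trans hM
    rw [hlamval i]
    calc ‖f (B i)‖ ^ 2 ≤ 1 ^ 2 := by
          exact pow_le_pow_left₀ (norm_nonneg _) h1 2
      _ = 1 := one_pow 2
  have hdet : Complex.normSq M.det = ∏ i, lam i := by
    have h1 : A.det = ∏ i, (lam i : ℂ) := hA.det_eq_prod_eigenvalues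
    have h2 : A.det = (Complex.normSq M.det : ℂ) := by
      rw [hAdef, Matrix.det_mul, Matrix.det_conjTranspose, mul_comm]
      exact Complex.mul_conj M.det
    have h3 : ((Complex.normSq M.det : ℝ) : ℂ) = ((∏ i, lam i : ℝ) : ℂ) := by
      rw [← h2, h1]; push_cast; rfl
    exact_mod_cast h3
  have hprodle : ∏ i, lam i ≤ ‖f v‖ ^ 2 := by
    rw [hqv]
    have h1 : ∏ i, lam i = ∑ j, (∏ i, lam i) * Complex.normSq (c j) := by
      rw [← Finset.mul_sum, hcv, mul_one]
    rw [h1]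
    refine Finset.sum_le_sum fun j _ => ?_
    refine mul_le_mul_of_nonneg_right ?_ (Complex.normSq_nonneg _)
    calc ∏ i, lam i = lam j * ∏ i ∈ Finset.univ.erase j, lam i :=
          (Finset.mul_prod_erase Finset.univ lam (Finset.mem_univ j)).symm
      _ ≤ lam j * 1 := by
          refine mul_le_mul_of_nonneg_left ?_ (hlam0 j)
          exact Finset.prod_le_one (fun i _ => hlam0 i) (fun i _ => hlam1 i)
      _ = lam j := mul_one _
  have habs : ‖M.det‖ = Real.sqrt (Complex.normSq M.det) := Complex.norm_def _
  rw [habs, hdet]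
  calc Real.sqrt (∏ i, lam i) ≤ Real.sqrt (‖f v‖ ^ 2) := Real.sqrt_le_sqrt hprodle
    _ = ‖f v‖ := Real.sqrt_sq (norm_nonneg _)


lemma exists_gapped_block {d n : ℕ} [NeZero n] (x y : Fin n → Fin d → ℤ) :
    ∃ S T : Finset (Fin n), n < S.card + T.card ∧
      ∀ j ∈ S, ∀ k ∈ T, Dm x y ≤ ed (x j) (y k) := by
  classical
  set G : Fin n → Finset (Fin n) :=
    fun j => Finset.univ.filter (fun k => ed (x j) (y k) < Dm x y) with hG
  by_cases hall : ∀ S : Finset (Fin n), S.card ≤ (S.biUnion G).card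
  · exfalso
    obtain ⟨f, hfinj, hf⟩ := (Finset.all_card_le_biUnion_card_iff_exists_injective G).mp hall
    have hbij : Function.Bijective f :=
      (Fintype.bijective_iff_injective_and_card f).mpr ⟨hfinj, rfl⟩
    let π := Equiv.ofBijective f hbij
    have h1 : Dm x y ≤ Finset.univ.sup' Finset.univ_nonempty
        (fun j => ed (x j) (y (π j))) := Finset.inf'_le _ (Finset.mem_univ π)
    obtain ⟨j, _, hj⟩ := Finset.le_sup'_iff Finset.univ_nonempty |>.mp h1
    have h2 : f j ∈ G j := hf j
    have h3 : ed (x j) (y (f j)) < Dm x y := by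
      simpa [hG] using h2
    have : π j = f j := rfl
    rw [this] at hj
    linarith
  · push_neg at hall
    obtain ⟨S, hS⟩ := hall
    refine ⟨S, (S.biUnion G)ᶜ, ?_, ?_⟩
    · have h1 : (S.biUnion G)ᶜ.card = n - (S.biUnion G).card := by
        rw [Finset.card_compl, Fintype.card_fin]
      have h2 : (S.biUnion G).card ≤ n := by
        simpa using Finset.card_le_univ (S.biUnion G)
      omega
    · intro j hj k hk
      by_contra hlt
      push_neg at hlt
      have : k ∈ S.biUnion G := Finset.mem_biUnion.mpr ⟨j, hj, by simp [hG, hlt]⟩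
      exact (Finset.mem_compl.mp hk) this

lemma exists_good_vector {n : ℕ} (M : Matrix (Fin n) (Fin n) ℂ) (S T : Finset (Fin n))
    (hcard : n < S.card + T.card) :
    ∃ v : Fin n → ℂ, (∑ k, Complex.normSq (v k)) = 1 ∧ (∀ k ∉ T, v k = 0) ∧
      ∀ j ∉ S, (M *ᵥ v) j = 0 := by
  classical
  let ext : ({k // k ∈ T} → ℂ) →ₗ[ℂ] (Fin n → ℂ) :=
    { toFun := fun w k => if h : k ∈ T then w ⟨k, h⟩ else 0
      map_add' := by intro a b; funext k; by_cases h : k ∈ T <;> simp [h]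
      map_smul' := by intro c a; funext k; by_cases h : k ∈ T <;> simp [h] }
  let L : ({k // k ∈ T} → ℂ) →ₗ[ℂ] ({j // j ∈ Sᶜ} → ℂ) :=
    (LinearMap.funLeft ℂ ℂ (Subtype.val : {j // j ∈ Sᶜ} → Fin n)).comp
      ((Matrix.mulVecLin M).comp ext)
  have hnotinj : ¬ Function.Injective L := by
    intro hinj
    have h1 := LinearMap.finrank_le_finrank_of_injective hinj
    rw [Module.finrank_pi ℂ, Module.finrank_pi ℂ, Fintype.card_coe, Fintype.card_coe,
      Finset.card_compl, Fintype.card_fin] at h1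
    have h2 : S.card ≤ n := by simpa using Finset.card_le_univ S
    omega
  rw [Function.not_injective_iff] at hnotinj
  obtain ⟨a, b, hab, hne⟩ := hnotinj
  set w := a - b with hw
  have hw0 : w ≠ 0 := sub_ne_zero.mpr hne
  have hLw : L w = 0 := by rw [hw, map_sub, hab, sub_self]
  set v0 := ext w with hv0
  have hv0ne : v0 ≠ 0 := by
    intro h
    apply hw0
    funext k
    have := congrFun h k.1
    simpa [hv0, ext, k.2] using this
  set N := ∑ k, Complex.normSq (v0 k) with hN
  have hNpos : 0 < N := by
    rcases Function.ne_iff.mp hv0ne with ⟨k, hk⟩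
    have : 0 < Complex.normSq (v0 k) := Complex.normSq_pos.mpr hk
    exact lt_of_lt_of_le this (Finset.single_le_sum
      (fun i _ => Complex.normSq_nonneg (v0 i)) (Finset.mem_univ k))
  refine ⟨((Real.sqrt N)⁻¹ : ℝ) • v0, ?_, ?_, ?_⟩
  · have hsq : ((Real.sqrt N)⁻¹ : ℝ) ^ 2 = N⁻¹ := by
      rw [← Real.sqrt_inv]
      exact Real.sq_sqrt (by positivity)
    have : ∑ k, Complex.normSq ((((Real.sqrt N)⁻¹ : ℝ) • v0) k)
        = ((Real.sqrt N)⁻¹) ^ 2 * N := by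
      rw [hN, Finset.mul_sum]
      refine Finset.sum_congr rfl fun k _ => ?_
      simp only [Pi.smul_apply, Complex.real_smul, Complex.normSq_mul, Complex.normSq_ofReal]
      ring
    rw [this, hsq, inv_mul_cancel₀ (ne_of_gt hNpos)]
  · intro k hk
    simp [hv0, ext, hk]
  · intro j hj
    have h1 : (M *ᵥ (((Real.sqrt N)⁻¹ : ℝ) • v0)) j
        = ((Real.sqrt N)⁻¹ : ℝ) • ((M *ᵥ v0) j) := by
      rw [Matrix.mulVec_smul]
      rfl
    have h2 : (M *ᵥ v0) j = 0 := by
      have := congrFun hLw ⟨j, Finset.mem_compl.mpr hj⟩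
      simpa [L, ext, hv0] using this
    rw [h1, h2, smul_zero]

theorem det_bound_Dm {d n : ℕ} [NeZero n] (x y : Fin n → Fin d → ℤ)
    (hx : Function.Injective x) (hy : Function.Injective y)
    (K : ℝ → ℝ) (hK : ∀ s, 0 ≤ K s) (C μ : ℝ) (hC : 0 < C) (hμ : 0 < μ)
    (M : Matrix (Fin n) (Fin n) ℂ) (hM : opNorm M ≤ 1)
    (hbound : ∀ j k, ‖M j k‖ ≤ C * Real.exp (-μ * K (ed (x j) (y k)))) :
    ‖M.det‖ ≤ C * Real.sqrt
      (∑ p ∈ Finset.univ.filter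
          (fun p : Fin n × Fin n => Dm x y ≤ ed (x p.1) (y p.2)),
        Real.exp (-2 * μ * K (ed (x p.1) (y p.2)))) := by
  classical
  obtain ⟨S, T, hcard, hST⟩ := exists_gapped_block x y
  obtain ⟨v, hv1, hvT, hvS⟩ := exists_good_vector M S T hcard
  set v' : EuclideanSpace ℂ (Fin n) := (WithLp.equiv 2 (Fin n → ℂ)).symm v with hv'
  have hnv : ‖v'‖ = 1 := by
    rw [EuclideanSpace.norm_eq]
    have h1 : ∑ k, ‖v' k‖ ^ 2 = 1 := by
      rw [← hv1]
      refine Finset.sum_congr rfl fun k _ => ?_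
      rw [Complex.sq_norm]
      rfl
    rw [h1, Real.sqrt_one]
  have hkey := det_le_norm_apply M hM v' hnv
  have himg : Matrix.toEuclideanLin M v' = (WithLp.equiv 2 (Fin n → ℂ)).symm (M *ᵥ v) :=
    Matrix.toEuclideanLin_apply_piLp_toLp M v
  have hnorm2 : ‖Matrix.toEuclideanLin M v'‖ ^ 2 = ∑ j, ‖(M *ᵥ v) j‖ ^ 2 := by
    rw [himg, EuclideanSpace.norm_eq]
    rw [Real.sq_sqrt (Finset.sum_nonneg fun j _ => sq_nonneg _)]
    rfl
  have hsplit : ∑ j, ‖(M *ᵥ v) j‖ ^ 2 = ∑ j ∈ S, ‖(M *ᵥ v) j‖ ^ 2 := by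
    symm
    refine Finset.sum_subset (Finset.subset_univ S) fun j _ hj => ?_
    rw [hvS j hj]
    simp
  have hvT2 : ∑ k ∈ T, ‖v k‖ ^ 2 ≤ 1 := by
    rw [← hv1]
    have : ∀ k, ‖v k‖ ^ 2 = Complex.normSq (v k) := fun k => by
      rw [Complex.sq_norm]
    simp_rw [this]
    exact Finset.sum_le_sum_of_subset_of_nonneg (Finset.subset_univ T)
      (fun k _ _ => Complex.normSq_nonneg _)
  have hrow : ∀ j, ‖(M *ᵥ v) j‖ ^ 2 ≤ ∑ k ∈ T, ‖M j k‖ ^ 2 := by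
    intro j
    have h1 : (M *ᵥ v) j = ∑ k ∈ T, M j k * v k := by
      have h0 : (M *ᵥ v) j = ∑ k, M j k * v k := rfl
      rw [h0]
      symm
      refine Finset.sum_subset (Finset.subset_univ T) fun k _ hk => ?_
      rw [hvT k hk, mul_zero]
    have h2 : ‖(M *ᵥ v) j‖ ≤ ∑ k ∈ T, ‖M j k‖ * ‖v k‖ := by
      rw [h1]
      refine (norm_sum_le _ _).trans (le_of_eq ?_)
      exact Finset.sum_congr rfl fun k _ => norm_mul _ _
    calc ‖(M *ᵥ v) j‖ ^ 2 ≤ (∑ k ∈ T, ‖M j k‖ * ‖v k‖) ^ 2 :=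
          pow_le_pow_left₀ (norm_nonneg _) h2 2
      _ ≤ (∑ k ∈ T, ‖M j k‖ ^ 2) * (∑ k ∈ T, ‖v k‖ ^ 2) :=
          Finset.sum_mul_sq_le_sq_mul_sq T _ _
      _ ≤ (∑ k ∈ T, ‖M j k‖ ^ 2) * 1 :=
          mul_le_mul_of_nonneg_left hvT2 (Finset.sum_nonneg fun k _ => sq_nonneg _)
      _ = ∑ k ∈ T, ‖M j k‖ ^ 2 := mul_one _
  have hentry : ∀ j k, ‖M j k‖ ^ 2 ≤ C ^ 2 * Real.exp (-2 * μ * K (ed (x j) (y k))) := by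
    intro j k
    have h1 : ‖M j k‖ ≤ C * Real.exp (-μ * K (ed (x j) (y k))) := hbound j k
    have h2 := pow_le_pow_left₀ (norm_nonneg _) h1 2
    refine h2.trans (le_of_eq ?_)
    rw [mul_pow, show (-2 * μ * K (ed (x j) (y k)) : ℝ)
      = (-μ * K (ed (x j) (y k))) + (-μ * K (ed (x j) (y k))) by ring, Real.exp_add]
    ring
  set SF := ∑ p ∈ Finset.univ.filter
      (fun p : Fin n × Fin n => Dm x y ≤ ed (x p.1) (y p.2)),
    Real.exp (-2 * μ * K (ed (x p.1) (y p.2))) with hSF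
  have hsub : S ×ˢ T ⊆ Finset.univ.filter
      (fun p : Fin n × Fin n => Dm x y ≤ ed (x p.1) (y p.2)) := by
    intro p hp
    rw [Finset.mem_product] at hp
    exact Finset.mem_filter.mpr ⟨Finset.mem_univ p, hST p.1 hp.1 p.2 hp.2⟩
  have hchain : ‖Matrix.toEuclideanLin M v'‖ ^ 2 ≤ C ^ 2 * SF := by
    rw [hnorm2, hsplit]
    calc ∑ j ∈ S, ‖(M *ᵥ v) j‖ ^ 2
        ≤ ∑ j ∈ S, ∑ k ∈ T, ‖M j k‖ ^ 2 := Finset.sum_le_sum fun j _ => hrow j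
      _ ≤ ∑ j ∈ S, ∑ k ∈ T, C ^ 2 * Real.exp (-2 * μ * K (ed (x j) (y k))) :=
          Finset.sum_le_sum fun j _ => Finset.sum_le_sum fun k _ => hentry j k
      _ = C ^ 2 * ∑ p ∈ S ×ˢ T, Real.exp (-2 * μ * K (ed (x p.1) (y p.2))) := by
          rw [Finset.sum_product, Finset.mul_sum]
          exact Finset.sum_congr rfl fun j _ => (Finset.mul_sum _ _ _).symm
      _ ≤ C ^ 2 * SF := by
          refine mul_le_mul_of_nonneg_left ?_ (sq_nonneg C)
          exact Finset.sum_le_sum_of_subset_of_nonneg hsub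
            (fun p _ _ => (Real.exp_pos _).le)
  calc ‖M.det‖ ≤ ‖Matrix.toEuclideanLin M v'‖ := hkey
    _ = Real.sqrt (‖Matrix.toEuclideanLin M v'‖ ^ 2) := (Real.sqrt_sq (norm_nonneg _)).symm
    _ ≤ Real.sqrt (C ^ 2 * SF) := Real.sqrt_le_sqrt hchain
    _ = C * Real.sqrt SF := by
        rw [Real.sqrt_mul (sq_nonneg C), Real.sqrt_sq hC.le]
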